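/- For all real parameters a > 0, b > 1, T > 0, one has limsup_{χ→+∞} G_{a,b,T}(χ) = +∞ and liminf_{χ→+∞} G_{a,b,T}(χ) = −∞. -/

import Mathlib

/-!
On the segment `[s_m, s_{m+1}]` the integrand is `(-1)^m a cos((χ - s_m)/(b^m T))`, whose
argument runs over exactly `[0, π]`. Hence `G` vanishes at every breakpoint and equals
`(-1)^m a T b^m` at the midpoint of the `m`-th segment; along even (odd) `m` these values
tend to `+∞` (`-∞`) while the midpoints tend to `+∞`.
-/

open Real Filter Set

/-- Breakpoints `s_n(b,T) = T·π·(b^n − 1)/(b − 1)`. -/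
noncomputable def brk (b T : ℝ) (n : ℕ) : ℝ := T * Real.pi * (b ^ n - 1) / (b - 1)

/-- Index of the segment containing `x ≥ 0`: the unique `m` with `s_m ≤ x < s_{m+1}`
(for `b > 1`, `T > 0`). -/
noncomputable def seg (b T x : ℝ) : ℕ := sInf {n : ℕ | x < brk b T (n + 1)}

/-- The saturated Nussbaum function `N_{a,b,T}`: on `[s_{n−1}, s_n)` (with `m = n − 1`)
it equals `(−1)^m·a·cos((χ − s_m)/(b^m·T))`, extended evenly to `χ < 0`. -/
noncomputable def satN (a b T : ℝ) (χ : ℝ) : ℝ :=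
  (-1 : ℝ) ^ (seg b T |χ|) * a *
    Real.cos ((|χ| - brk b T (seg b T |χ|)) / (b ^ (seg b T |χ|) * T))

/-- The integrated function `G_{a,b,T}(χ) = ∫_0^χ N_{a,b,T}(τ) dτ`. -/
noncomputable def satG (a b T : ℝ) (χ : ℝ) : ℝ := ∫ τ in (0:ℝ)..χ, satN a b T τ

open MeasureTheory

noncomputable def peak (b T : ℝ) (m : ℕ) : ℝ := brk b T m + π / 2 * (b ^ m * T)

section Segments

variable {a b T : ℝ}

lemma brk_zero (b T : ℝ) : brk b T 0 = 0 := by simp [brk]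

lemma brk_succ (hb : b ≠ 1) (n : ℕ) : brk b T (n + 1) = brk b T n + π * (b ^ n * T) := by
  have : b - 1 ≠ 0 := sub_ne_zero.2 hb
  unfold brk
  field_simp
  ring

lemma brk_nonneg (hb : 1 < b) (hT : 0 ≤ T) (n : ℕ) : 0 ≤ brk b T n :=
  div_nonneg (mul_nonneg (mul_nonneg hT pi_pos.le) (sub_nonneg.2 (one_le_pow₀ hb.le)))
    (sub_nonneg.2 hb.le)

lemma brk_strictMono (hb : 1 < b) (hT : 0 < T) : StrictMono (brk b T) :=
  strictMono_nat_of_lt_succ fun n => by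
    rw [brk_succ hb.ne']
    have : 0 < b ^ n * T := mul_pos (pow_pos (by linarith) n) hT
    linarith [mul_pos pi_pos this]

lemma seg_eq_of_mem_Ico (hb : 1 < b) (hT : 0 < T) {m : ℕ} {x : ℝ}
    (hx : x ∈ Ico (brk b T m) (brk b T (m + 1))) : seg b T x = m := by
  have hm : m ∈ {n : ℕ | x < brk b T (n + 1)} := hx.2
  refine le_antisymm (Nat.sInf_le hm) (not_lt.1 fun hlt => ?_)
  have hseg : x < brk b T (seg b T x + 1) := Nat.sInf_mem ⟨m, hm⟩
  have : brk b T (seg b T x + 1) ≤ brk b T m := (brk_strictMono hb hT).monotone hlt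
  linarith [hx.1]

lemma satN_eqOn_Ico (a : ℝ) (hb : 1 < b) (hT : 0 < T) (m : ℕ) :
    EqOn (satN a b T) (fun x => (-1) ^ m * a * cos ((x - brk b T m) / (b ^ m * T)))
      (Ico (brk b T m) (brk b T (m + 1))) := fun x hx => by
  rw [satN, abs_of_nonneg ((brk_nonneg hb hT.le m).trans hx.1), seg_eq_of_mem_Ico hb hT hx]

lemma hasDerivAt_mul_sin_div (K s : ℝ) {c : ℝ} (hc : c ≠ 0) (x : ℝ) :
    HasDerivAt (fun x => K * c * sin ((x - s) / c)) (K * cos ((x - s) / c)) x := by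
  refine ((((hasDerivAt_id' x).sub_const s).div_const c).sin.const_mul (K * c)).congr_deriv ?_
  field_simp

variable {m : ℕ} {y : ℝ}

lemma intervalIntegrable_satN_brk_of_mem_Icc (a : ℝ) (hb : 1 < b) (hT : 0 < T)
    (hy : y ∈ Icc (brk b T m) (brk b T (m + 1))) :
    IntervalIntegrable (satN a b T) volume (brk b T m) y := by
  have hcos : Continuous fun x => (-1) ^ m * a * cos ((x - brk b T m) / (b ^ m * T)) := by
    fun_prop
  have hsub : Ioo (brk b T m) y ⊆ Ico (brk b T m) (brk b T (m + 1)) :=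
    fun x hx => ⟨hx.1.le, hx.2.trans_le hy.2⟩
  rw [intervalIntegrable_iff_integrableOn_Ioo_of_le hy.1]
  exact ((intervalIntegrable_iff_integrableOn_Ioo_of_le hy.1).1
    (hcos.intervalIntegrable _ _)).congr_fun ((satN_eqOn_Ico a hb hT m).symm.mono hsub)
      measurableSet_Ioo

lemma integral_satN_brk_of_mem_Icc (a : ℝ) (hb : 1 < b) (hT : 0 < T)
    (hy : y ∈ Icc (brk b T m) (brk b T (m + 1))) :
    ∫ x in brk b T m..y, satN a b T x =
      (-1) ^ m * a * (b ^ m * T) * sin ((y - brk b T m) / (b ^ m * T)) := by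
  have hc : b ^ m * T ≠ 0 := (mul_pos (pow_pos (by linarith) m) hT).ne'
  rw [intervalIntegral.integral_eq_sub_of_hasDerivAt_of_le hy.1
    (f := fun x => (-1) ^ m * a * (b ^ m * T) * sin ((x - brk b T m) / (b ^ m * T)))
    (by fun_prop) (fun x hx => ?_) (intervalIntegrable_satN_brk_of_mem_Icc a hb hT hy)]
  · simp
  · rw [satN_eqOn_Ico a hb hT m ⟨hx.1.le, hx.2.trans_le hy.2⟩]
    exact hasDerivAt_mul_sin_div _ _ hc x

lemma intervalIntegrable_satN_zero_brk (a : ℝ) (hb : 1 < b) (hT : 0 < T) (m : ℕ) :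
    IntervalIntegrable (satN a b T) volume 0 (brk b T m) := by
  induction m with
  | zero => rw [brk_zero]
  | succ m ih =>
    exact ih.trans (intervalIntegrable_satN_brk_of_mem_Icc a hb hT
      ⟨(brk_strictMono hb hT m.lt_succ_self).le, le_rfl⟩)

lemma satG_of_mem_Icc (a : ℝ) (hb : 1 < b) (hT : 0 < T)
    (hy : y ∈ Icc (brk b T m) (brk b T (m + 1))) :
    satG a b T y =
      satG a b T (brk b T m) + (-1) ^ m * a * (b ^ m * T) * sin ((y - brk b T m) / (b ^ m * T)) := by
  rw [satG, satG, ← intervalIntegral.integral_add_adjacent_intervals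
    (intervalIntegrable_satN_zero_brk a hb hT m) (intervalIntegrable_satN_brk_of_mem_Icc a hb hT hy),
    integral_satN_brk_of_mem_Icc a hb hT hy]

lemma satG_brk (a : ℝ) (hb : 1 < b) (hT : 0 < T) (m : ℕ) : satG a b T (brk b T m) = 0 := by
  induction m with
  | zero => rw [brk_zero, satG, intervalIntegral.integral_same]
  | succ m ih =>
    have hc : b ^ m * T ≠ 0 := (mul_pos (pow_pos (by linarith) m) hT).ne'
    have hπ : (brk b T (m + 1) - brk b T m) / (b ^ m * T) = π := by
      rw [brk_succ hb.ne']
      field_simp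
      ring
    rw [satG_of_mem_Icc a hb hT ⟨(brk_strictMono hb hT m.lt_succ_self).le, le_rfl⟩, ih, hπ,
      sin_pi, mul_zero, add_zero]

lemma satG_peak (a : ℝ) (hb : 1 < b) (hT : 0 < T) (m : ℕ) :
    satG a b T (peak b T m) = (-1) ^ m * (a * T * b ^ m) := by
  have hc : 0 < b ^ m * T := mul_pos (pow_pos (by linarith) m) hT
  have hmem : peak b T m ∈ Icc (brk b T m) (brk b T (m + 1)) := by
    rw [peak, brk_succ hb.ne']
    constructor <;> nlinarith [pi_pos]
  have hπ : (peak b T m - brk b T m) / (b ^ m * T) = π / 2 := by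
    rw [peak]
    field_simp
    ring
  rw [satG_of_mem_Icc a hb hT hmem, satG_brk a hb hT, hπ, sin_pi_div_two]
  ring

lemma tendsto_peak_atTop (hb : 1 < b) (hT : 0 < T) : Tendsto (peak b T) atTop atTop := by
  refine tendsto_atTop_mono (fun m => ?_)
    (((tendsto_pow_atTop_atTop_of_one_lt hb).atTop_mul_const hT).const_mul_atTop
      (half_pos pi_pos))
  rw [peak]
  linarith [brk_nonneg hb hT.le m]

end Segments

lemma limsup_coe_eq_top_of_tendsto {α : Type*} {l : Filter α} {f : α → ℝ} {u : ℕ → α}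
    (hu : Tendsto u atTop l) (hfu : Tendsto (f ∘ u) atTop atTop) :
    limsup (fun x => (f x : EReal)) l = ⊤ := by
  refine top_le_iff.mp ?_
  calc (⊤ : EReal) = limsup ((fun x => (f x : EReal)) ∘ u) atTop :=
        (EReal.tendsto_coe_atTop.comp hfu).limsup_eq.symm
    _ = limsup (fun x => (f x : EReal)) (map u atTop) := limsup_comp _ u atTop
    _ ≤ limsup (fun x => (f x : EReal)) l := limsup_le_limsup_of_le hu

lemma liminf_coe_eq_bot_of_tendsto {α : Type*} {l : Filter α} {f : α → ℝ} {u : ℕ → α}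
    (hu : Tendsto u atTop l) (hfu : Tendsto (f ∘ u) atTop atBot) :
    liminf (fun x => (f x : EReal)) l = ⊥ := by
  refine le_bot_iff.mp ?_
  calc liminf (fun x => (f x : EReal)) l ≤ liminf (fun x => (f x : EReal)) (map u atTop) :=
        liminf_le_liminf_of_le hu
    _ = liminf ((fun x => (f x : EReal)) ∘ u) atTop := (liminf_comp _ u atTop).symm
    _ = ⊥ := (EReal.tendsto_coe_atBot.comp hfu).liminf_eq

/-- `limsup_{χ→+∞} G = +∞` and `liminf_{χ→+∞} G = −∞`. -/
theorem satG_limsup_liminf (a b T : ℝ) (ha : 0 < a) (hb : 1 < b) (hT : 0 < T) :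
    Filter.limsup (fun χ : ℝ => ((satG a b T χ : ℝ) : EReal)) Filter.atTop = ⊤ ∧
    Filter.liminf (fun χ : ℝ => ((satG a b T χ : ℝ) : EReal)) Filter.atTop = ⊥ := by
  have hamp : Tendsto (fun m : ℕ => a * T * b ^ m) atTop atTop :=
    (tendsto_pow_atTop_atTop_of_one_lt hb).const_mul_atTop (mul_pos ha hT)
  have heven : StrictMono fun k : ℕ => 2 * k := strictMono_mul_left_of_pos two_pos
  have hodd : StrictMono fun k : ℕ => 2 * k + 1 := fun i j h => by dsimp only; omega
  constructor
  · refine limsup_coe_eq_top_of_tendsto ((tendsto_peak_atTop hb hT).comp heven.tendsto_atTop)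
      ((hamp.comp heven.tendsto_atTop).congr fun k => ?_)
    simp [satG_peak a hb hT, pow_mul]
  · refine liminf_coe_eq_bot_of_tendsto ((tendsto_peak_atTop hb hT).comp hodd.tendsto_atTop)
      ((tendsto_neg_atTop_atBot.comp (hamp.comp hodd.tendsto_atTop)).congr fun k => ?_)
    simp [satG_peak a hb hT, pow_succ, pow_mul]
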